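/- For k > 0, the rank-one intertwining operator V_k satisfies the intertwining relation T_k ∘ V_k = V_k ∘ d/dx on C^1(ℝ): for every continuously differentiable f and every x ≠ 0, T_k(V_k f)(x) = V_k(f')(x), where T_k f(x) = f'(x) + k(f(x)−f(−x))/x and V_k f(x) = (Γ(k+1/2)/(Γ(1/2)Γ(k))) ∫_{−1}^{1} f(xt)(1−t)^{k−1}(1+t)^{k} dt. -/

import Mathlib

/-!
Write `V_k f(x) = c ∫₋₁¹ f(xt) w(t) dt` with the Jacobi weight `w(t) = (1 - t)^(k-1) (1 + t)^k`.
Differentiating under the integral sign, `(V_k f)'(x) = c ∫ f'(xt) t w(t) dt`. Substituting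
`t ↦ -t` and using `w(t) - w(-t) = 2t (1 - t²)^(k-1)` gives
`V_k f(x) - V_k f(-x) = 2c ∫ t f(xt) (1 - t²)^(k-1) dt`, and integration by parts against
`d/dt (1 - t²)^k = -2kt (1 - t²)^(k-1)` (the boundary terms vanish since `k > 0`) turns
`k (V_k f(x) - V_k f(-x)) / x` into `c ∫ f'(xt) (1 - t²)^k dt`. The two pieces add up to
`V_k f'(x)` because `t w(t) + (1 - t²)^k = t w(t) + (1 - t) w(t) = w(t)`.
-/

open MeasureTheory Set Metric

/-- The rank-one Dunkl operator. -/
noncomputable def dunklT (k : ℝ) (f : ℝ → ℝ) (x : ℝ) : ℝ :=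
  deriv f x + k * (f x - f (-x)) / x

/-- The rank-one Dunkl intertwining operator `V_k` for `k > 0`. -/
noncomputable def dunklV (k : ℝ) (f : ℝ → ℝ) (x : ℝ) : ℝ :=
  (Real.Gamma (k + 1/2) / (Real.Gamma (1/2) * Real.Gamma k)) *
    ∫ t in (-1:ℝ)..1, f (x * t) * (1 - t) ^ (k - 1) * (1 + t) ^ k

lemma Real.rpow_eq_rpow_sub_one_mul_self {x y : ℝ} (hx : 0 ≤ x) (hy : y ≠ 0) :
    x ^ y = x ^ (y - 1) * x := by
  simpa using Real.rpow_add_one' hx (y := y - 1) (by simpa using hy)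

noncomputable def jacobiWeight (a b t : ℝ) : ℝ := (1 - t) ^ a * (1 + t) ^ b

lemma jacobiWeight_neg (a b t : ℝ) : jacobiWeight a b (-t) = jacobiWeight b a t := by
  rw [jacobiWeight, jacobiWeight, sub_neg_eq_add, ← sub_eq_add_neg, mul_comm]

lemma jacobiWeight_self {t : ℝ} (ht : t ∈ Icc (-1 : ℝ) 1) (a : ℝ) :
    jacobiWeight a a t = (1 - t ^ 2) ^ a := by
  rw [jacobiWeight, ← Real.mul_rpow (by linarith [ht.2]) (by linarith [ht.1])]
  ring_nf

lemma jacobiWeight_eq_one_sub_mul {a : ℝ} (b : ℝ) {t : ℝ} (ha : a ≠ 0) (ht : t ≤ 1) :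
    jacobiWeight a b t = (1 - t) * jacobiWeight (a - 1) b t := by
  rw [jacobiWeight, jacobiWeight, Real.rpow_eq_rpow_sub_one_mul_self (by linarith) ha]
  ring

lemma jacobiWeight_eq_one_add_mul (a : ℝ) {b t : ℝ} (hb : b ≠ 0) (ht : -1 ≤ t) :
    jacobiWeight a b t = (1 + t) * jacobiWeight a (b - 1) t := by
  rw [jacobiWeight, jacobiWeight,
    Real.rpow_eq_rpow_sub_one_mul_self (x := 1 + t) (by linarith) hb]
  ring

lemma jacobiWeight_sub_jacobiWeight_neg {k t : ℝ} (hk : k ≠ 0) (ht : t ∈ Icc (-1 : ℝ) 1) :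
    jacobiWeight (k - 1) k t - jacobiWeight (k - 1) k (-t) = 2 * t * (1 - t ^ 2) ^ (k - 1) := by
  rw [jacobiWeight_neg, jacobiWeight_eq_one_add_mul _ hk ht.1,
    jacobiWeight_eq_one_sub_mul _ hk ht.2, jacobiWeight_self ht]
  ring

lemma mul_jacobiWeight_add_one_sub_sq_rpow {k t : ℝ} (hk : k ≠ 0) (ht : t ∈ Icc (-1 : ℝ) 1) :
    t * jacobiWeight (k - 1) k t + (1 - t ^ 2) ^ k = jacobiWeight (k - 1) k t := by
  rw [← jacobiWeight_self ht, jacobiWeight_eq_one_sub_mul _ hk ht.2]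
  ring

lemma intervalIntegrable_jacobiWeight_neg_one_zero (a : ℝ) {b : ℝ} (hb : -1 < b) :
    IntervalIntegrable (jacobiWeight a b) volume (-1) 0 := by
  have hplus : IntervalIntegrable (fun t : ℝ => (1 + t) ^ b) volume (-1) 0 := by
    simpa using (intervalIntegral.intervalIntegrable_rpow' hb (a := 0) (b := 1)).comp_add_left 1
  refine hplus.continuousOn_mul (ContinuousOn.rpow_const (by fun_prop) fun t ht => Or.inl ?_)
  rw [uIcc_of_le (by norm_num)] at ht
  linarith [ht.2]

lemma intervalIntegrable_jacobiWeight {a b : ℝ} (ha : -1 < a) (hb : -1 < b) :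
    IntervalIntegrable (jacobiWeight a b) volume (-1) 1 := by
  refine (intervalIntegrable_jacobiWeight_neg_one_zero a hb).trans ?_
  rw [IntervalIntegrable.iff_comp_neg]
  simpa [jacobiWeight_neg] using (intervalIntegrable_jacobiWeight_neg_one_zero b ha).symm

lemma intervalIntegrable_one_sub_sq_rpow {a : ℝ} (ha : -1 < a) :
    IntervalIntegrable (fun t : ℝ => (1 - t ^ 2) ^ a) volume (-1) 1 := by
  refine (intervalIntegrable_congr fun t ht => ?_).1 (intervalIntegrable_jacobiWeight ha ha)
  rw [uIoc_of_le (by norm_num)] at ht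
  exact jacobiWeight_self (Ioc_subset_Icc_self ht) a

theorem hasDerivAt_integral_comp_mul_mul {f w : ℝ → ℝ} (hf : ContDiff ℝ 1 f)
    (hw : IntervalIntegrable w volume (-1) 1) (x₀ : ℝ) :
    HasDerivAt (fun x => ∫ t in (-1 : ℝ)..1, f (x * t) * w t)
      (∫ t in (-1 : ℝ)..1, deriv f (x₀ * t) * t * w t) x₀ := by
  have hf' : Continuous (deriv f) := hf.continuous_deriv le_rfl
  obtain ⟨M, hM⟩ := (isCompact_closedBall (0 : ℝ) (‖x₀‖ + 1)).exists_bound_of_continuousOn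
    hf'.continuousOn
  have hM0 : 0 ≤ M :=
    (norm_nonneg (deriv f 0)).trans (hM 0 (mem_closedBall_self (by positivity)))
  have hw_meas := hw.def'.aestronglyMeasurable
  refine (intervalIntegral.hasDerivAt_integral_of_dominated_loc_of_deriv_le
    (F := fun x t => f (x * t) * w t) (F' := fun x t => deriv f (x * t) * t * w t)
    (bound := fun t => M * ‖w t‖)
    (ball_mem_nhds x₀ one_pos) ?_ ?_ ?_ ?_ (hw.norm.const_mul M) ?_).2
  · exact .of_forall fun x =>
      (hf.continuous.comp (continuous_const_mul x)).aestronglyMeasurable.mul hw_meas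
  · exact hw.continuousOn_mul (hf.continuous.comp (continuous_const_mul x₀)).continuousOn
  · exact ((hf'.comp (continuous_const_mul x₀)).mul continuous_id).aestronglyMeasurable.mul
      hw_meas
  · refine .of_forall fun t ht x hx => ?_
    rw [uIoc_of_le (by norm_num)] at ht
    have ht1 : ‖t‖ ≤ 1 := abs_le.2 ⟨by linarith [ht.1], ht.2⟩
    have hxt : x * t ∈ closedBall (0 : ℝ) (‖x₀‖ + 1) := by
      rw [mem_closedBall_zero_iff, norm_mul]
      nlinarith [norm_lt_of_mem_ball hx, norm_nonneg x]
    calc ‖deriv f (x * t) * t * w t‖ = ‖deriv f (x * t)‖ * ‖t‖ * ‖w t‖ := by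
          simp only [norm_mul]
      _ ≤ M * 1 * ‖w t‖ := by gcongr; exact hM _ hxt
      _ = M * ‖w t‖ := by ring
  · exact .of_forall fun t _ x _ =>
      ((hf.differentiable one_ne_zero (x * t)).hasDerivAt.comp x
        (hasDerivAt_mul_const t)).mul_const (w t)

theorem mul_integral_deriv_comp_mul_one_sub_sq_rpow {k : ℝ} (hk : 0 < k) {f : ℝ → ℝ}
    (hf : ContDiff ℝ 1 f) (x : ℝ) :
    x * ∫ t in (-1 : ℝ)..1, deriv f (x * t) * (1 - t ^ 2) ^ k =
      2 * k * ∫ t in (-1 : ℝ)..1, t * f (x * t) * (1 - t ^ 2) ^ (k - 1) := by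
  have hf' : Continuous (deriv f) := hf.continuous_deriv le_rfl
  have hu : ∀ t ∈ Ioo (min (-1 : ℝ) 1) (max (-1) 1),
      HasDerivAt (fun t => f (x * t)) (deriv f (x * t) * x) t := fun t _ =>
    (hf.differentiable one_ne_zero (x * t)).hasDerivAt.comp t (hasDerivAt_const_mul x)
  have hv : ∀ t ∈ Ioo (min (-1 : ℝ) 1) (max (-1) 1),
      HasDerivAt (fun t : ℝ => (1 - t ^ 2) ^ k) (-(2 * t) * k * (1 - t ^ 2) ^ (k - 1)) t := by
    intro t ht
    rw [min_eq_left (by norm_num), max_eq_right (by norm_num)] at ht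
    have h : HasDerivAt (fun t : ℝ => 1 - t ^ 2) (-(2 * t)) t := by
      simpa using (hasDerivAt_pow 2 t).const_sub 1
    exact h.rpow_const (Or.inl (by nlinarith [ht.1, ht.2]))
  have ibp := intervalIntegral.integral_mul_deriv_eq_deriv_mul_of_hasDerivAt
    (u := fun t => f (x * t)) (v := fun t => (1 - t ^ 2) ^ k)
    (hf.continuous.comp (continuous_const_mul x)).continuousOn
    (Continuous.rpow_const (by fun_prop) fun _ => Or.inr hk.le).continuousOn hu hv
    ((by fun_prop : Continuous fun t => deriv f (x * t) * x).intervalIntegrable _ _)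
    ((intervalIntegrable_one_sub_sq_rpow (by linarith)).continuousOn_mul (by fun_prop))
  have hlhs : ∫ t in (-1 : ℝ)..1, f (x * t) * (-(2 * t) * k * (1 - t ^ 2) ^ (k - 1)) =
      -(2 * k) * ∫ t in (-1 : ℝ)..1, t * f (x * t) * (1 - t ^ 2) ^ (k - 1) := by
    rw [← intervalIntegral.integral_const_mul]; congr 1; ext t; ring
  have hrhs : ∫ t in (-1 : ℝ)..1, deriv f (x * t) * x * (1 - t ^ 2) ^ k =
      x * ∫ t in (-1 : ℝ)..1, deriv f (x * t) * (1 - t ^ 2) ^ k := by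
    rw [← intervalIntegral.integral_const_mul]; congr 1; ext t; ring
  rw [hlhs, hrhs] at ibp
  norm_num [Real.zero_rpow hk.ne'] at ibp
  linarith

theorem integral_comp_mul_sub_integral_comp_neg_mul {k : ℝ} (hk : 0 < k) {f : ℝ → ℝ}
    (hf : Continuous f) (x : ℝ) :
    (∫ t in (-1 : ℝ)..1, f (x * t) * jacobiWeight (k - 1) k t) -
        ∫ t in (-1 : ℝ)..1, f (-x * t) * jacobiWeight (k - 1) k t =
      2 * ∫ t in (-1 : ℝ)..1, t * f (x * t) * (1 - t ^ 2) ^ (k - 1) := by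
  have hneg : ∫ t in (-1 : ℝ)..1, f (-x * t) * jacobiWeight (k - 1) k t =
      ∫ t in (-1 : ℝ)..1, f (x * t) * jacobiWeight (k - 1) k (-t) := by
    have h := intervalIntegral.integral_comp_neg (a := -1) (b := 1)
      fun t => f (-x * t) * jacobiWeight (k - 1) k t
    simp only [neg_mul_neg, neg_neg] at h
    exact h.symm
  have hint : ∀ w : ℝ → ℝ, IntervalIntegrable w volume (-1) 1 →
      IntervalIntegrable (fun t => f (x * t) * w t) volume (-1) 1 := fun w hw =>
    hw.continuousOn_mul (by fun_prop)
  rw [hneg, ← intervalIntegral.integral_sub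
    (hint _ (intervalIntegrable_jacobiWeight (by linarith) (by linarith)))
    (hint _ (by simpa only [jacobiWeight_neg] using
      intervalIntegrable_jacobiWeight (a := k) (b := k - 1) (by linarith) (by linarith))),
    ← intervalIntegral.integral_const_mul]
  refine intervalIntegral.integral_congr fun t ht => ?_
  rw [uIcc_of_le (by norm_num)] at ht
  rw [← mul_sub, jacobiWeight_sub_jacobiWeight_neg hk.ne' ht]
  ring

/-- The intertwining relation `T_k ∘ V_k = V_k ∘ d/dx` on `C¹(ℝ)`. -/
theorem intertwining_relation (k : ℝ) (hk : 0 < k) (f : ℝ → ℝ) (hf : ContDiff ℝ 1 f) :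
    ∀ x : ℝ, x ≠ 0 → dunklT k (dunklV k f) x = dunklV k (deriv f) x := by
  intro x hx
  set c := Real.Gamma (k + 1/2) / (Real.Gamma (1/2) * Real.Gamma k)
  set w := jacobiWeight (k - 1) k
  have hw : IntervalIntegrable w volume (-1) 1 :=
    intervalIntegrable_jacobiWeight (by linarith) (by linarith)
  have hV : ∀ g y, dunklV k g y = c * ∫ t in (-1 : ℝ)..1, g (y * t) * w t := fun g y => by
    simp only [dunklV, w, jacobiWeight, mul_assoc, c]
  have hderiv : HasDerivAt (dunklV k f)
      (c * ∫ t in (-1 : ℝ)..1, deriv f (x * t) * t * w t) x := by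
    simpa only [← hV] using (hasDerivAt_integral_comp_mul_mul hf hw x).const_mul c
  have hodd : k * (dunklV k f x - dunklV k f (-x)) / x =
      c * ∫ t in (-1 : ℝ)..1, deriv f (x * t) * (1 - t ^ 2) ^ k := by
    rw [hV, hV, div_eq_iff hx, ← mul_sub,
      integral_comp_mul_sub_integral_comp_neg_mul hk hf.continuous]
    linear_combination -c * mul_integral_deriv_comp_mul_one_sub_sq_rpow hk hf x
  have hint : IntervalIntegrable (fun t => deriv f (x * t) * (1 - t ^ 2) ^ k) volume (-1) 1 :=
    (((hf.continuous_deriv le_rfl).comp (continuous_const_mul x)).mul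
      (Continuous.rpow_const (by fun_prop) fun _ => Or.inr hk.le)).intervalIntegrable _ _
  rw [dunklT, hderiv.deriv, hodd, hV, ← mul_add,
    ← intervalIntegral.integral_add (hw.continuousOn_mul (by fun_prop)) hint]
  congr 1
  refine intervalIntegral.integral_congr fun t ht => ?_
  rw [uIcc_of_le (by norm_num)] at ht
  linear_combination deriv f (x * t) * mul_jacobiWeight_add_one_sub_sq_rpow hk.ne' ht
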